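/- Let g be an invertible semilinear automorphism of V = F^m and τ the induced map on subspaces. Let 𝒜 be an α-flag. Then τ maps Ω_α^𝒜 onto itself if and only if τ(A_i) = A_i for all i with a_i ∈ α_nc. -/
import Mathlib


open Module

section Aux

variable {F : Type*} [Field F] {V : Type*} [AddCommGroup V] [Module F V]
  [FiniteDimensional F V]

lemma aux_finrank_sup_span (P : Submodule F V) {w : V} (hw : w ∉ P) :
    finrank F ↥(P ⊔ (F ∙ w)) = finrank F ↥P + 1 := by
  have hw0 : w ≠ 0 := fun h => hw (h ▸ P.zero_mem)
  have h1 : P ⊓ ((F ∙ w)) = ⊥ := by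
    rw [eq_bot_iff]
    intro x hx
    obtain ⟨hxP, hxw⟩ := Submodule.mem_inf.mp hx
    obtain ⟨c, rfl⟩ := Submodule.mem_span_singleton.mp hxw
    rcases eq_or_ne c 0 with rfl | hc
    · simp
    · exfalso
      apply hw
      have := P.smul_mem c⁻¹ hxP
      rwa [smul_smul, inv_mul_cancel₀ hc, one_smul] at this
  have h2 := Submodule.finrank_sup_add_finrank_inf_eq P ((F ∙ w))
  rw [h1, finrank_bot, finrank_span_singleton hw0] at h2
  omega

lemma aux_finrank_sup_span_le (P : Submodule F V) (w : V) :
    finrank F ↥(P ⊔ (F ∙ w)) ≤ finrank F ↥P + 1 := by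
  by_cases hw : w ∈ P
  · have : (F ∙ w) ≤ P := (Submodule.span_singleton_le_iff_mem w P).mpr hw
    rw [sup_eq_left.mpr this]
    omega
  · rw [aux_finrank_sup_span P hw]

lemma aux_inf_sup_span_le (P X : Submodule F V) (w : V) :
    finrank F ↥((P ⊔ (F ∙ w)) ⊓ X) ≤ finrank F ↥(P ⊓ X) + 1 := by
  set U := (P ⊔ (F ∙ w)) ⊓ X with hU
  have hUP : U ⊓ P = P ⊓ X := by
    apply le_antisymm
    · intro x hx
      obtain ⟨hx1, hxP⟩ := Submodule.mem_inf.mp hx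
      exact Submodule.mem_inf.mpr ⟨hxP, (Submodule.mem_inf.mp hx1).2⟩
    · intro x hx
      obtain ⟨hxP, hxX⟩ := Submodule.mem_inf.mp hx
      exact Submodule.mem_inf.mpr
        ⟨Submodule.mem_inf.mpr ⟨Submodule.mem_sup_left hxP, hxX⟩, hxP⟩
  have hUsup : U ⊔ P ≤ P ⊔ (F ∙ w) := sup_le inf_le_left le_sup_left
  have h1 := Submodule.finrank_sup_add_finrank_inf_eq U P
  rw [hUP] at h1
  have h2 : finrank F ↥(U ⊔ P) ≤ finrank F ↥P + 1 :=
    le_trans (Submodule.finrank_mono hUsup) (aux_finrank_sup_span_le P w)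
  have h3 : finrank F ↥P ≤ finrank F ↥(U ⊔ P) := Submodule.finrank_mono le_sup_right
  omega

lemma aux_inf_eq (P X Aj : Submodule F V) (w : V) (hP : P ≤ Aj) (hwA : w ∈ Aj)
    (hw : w ∉ X ⊓ Aj ⊔ P) : (P ⊔ (F ∙ w)) ⊓ X = P ⊓ X := by
  apply le_antisymm
  · intro x hx
    obtain ⟨hx1, hxX⟩ := Submodule.mem_inf.mp hx
    obtain ⟨p, hp, z, hz, rfl⟩ := Submodule.mem_sup.mp hx1
    obtain ⟨c, rfl⟩ := Submodule.mem_span_singleton.mp hz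
    rcases eq_or_ne c 0 with rfl | hc
    · simpa using Submodule.mem_inf.mpr ⟨hp, by simpa using hxX⟩
    · exfalso
      apply hw
      have hxA : p + c • w ∈ Aj := Aj.add_mem (hP hp) (Aj.smul_mem c hwA)
      have hkey : c⁻¹ • (p + c • w) - c⁻¹ • p = w := by
        rw [smul_add, smul_smul, inv_mul_cancel₀ hc, one_smul, add_sub_cancel_left]
      rw [← hkey]
      refine Submodule.sub_mem _ (Submodule.mem_sup_left ?_) (Submodule.mem_sup_right ?_)
      · exact Submodule.mem_inf.mpr ⟨X.smul_mem _ hxX, Aj.smul_mem _ hxA⟩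
      · exact P.smul_mem _ hp
  · exact inf_le_inf_right _ le_sup_left

lemma aux_inf_mono_finrank {W A B : Submodule F V} (h : A ≤ B) :
    finrank F ↥(W ⊓ B) + finrank F ↥A ≤ finrank F ↥(W ⊓ A) + finrank F ↥B := by
  have h1 := Submodule.finrank_sup_add_finrank_inf_eq (W ⊓ B) A
  have h2 : (W ⊓ B) ⊓ A = W ⊓ A := by
    rw [inf_assoc, inf_eq_right.mpr h]
  have h3 : (W ⊓ B) ⊔ A ≤ B := sup_le inf_le_right h
  have h4 := Submodule.finrank_mono h3
  rw [h2] at h1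
  omega

lemma strictmono_gap {ℓ : ℕ} {a : Fin ℓ → ℕ} (ha : StrictMono a) :
    ∀ d : ℕ, ∀ i j : Fin ℓ, (j : ℕ) = (i : ℕ) + d → a i + d ≤ a j := by
  intro d
  induction d with
  | zero =>
    intro i j h
    have : i = j := Fin.ext (by omega)
    simp [this]
  | succ d ih =>
    intro i j h
    have hj' : (i : ℕ) + d < ℓ := by have := j.isLt; omega
    have h1 := ih i ⟨(i : ℕ) + d, hj'⟩ rfl
    have h2 : a ⟨(i : ℕ) + d, hj'⟩ < a j := ha (by rw [Fin.lt_def]; simp; omega)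
    omega

lemma a_lower {ℓ : ℕ} {a : Fin ℓ → ℕ} (ha : StrictMono a) (h1 : ∀ j, 1 ≤ a j)
    (j : Fin ℓ) : (j : ℕ) + 1 ≤ a j := by
  have hpos : 0 < ℓ := lt_of_le_of_lt (Nat.zero_le _) j.isLt
  have := strictmono_gap ha (j : ℕ) ⟨0, hpos⟩ j (by simp)
  have := h1 ⟨0, hpos⟩
  omega

lemma nc_gap {ℓ : ℕ} {a : Fin ℓ → ℕ} (ha : StrictMono a) {i j : Fin ℓ}
    (hnc : ¬ ∃ k, a k = a i + 1) (hij : (i : ℕ) < (j : ℕ)) :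
    a i + ((j : ℕ) - (i : ℕ)) + 1 ≤ a j := by
  have hi1 : (i : ℕ) + 1 < ℓ := by have := j.isLt; omega
  have h2 : a i < a ⟨(i : ℕ) + 1, hi1⟩ := ha (by rw [Fin.lt_def]; simp)
  have h3 : a ⟨(i : ℕ) + 1, hi1⟩ ≠ a i + 1 := fun h => hnc ⟨_, h⟩
  have h4 := strictmono_gap ha ((j : ℕ) - ((i : ℕ) + 1)) ⟨(i : ℕ) + 1, hi1⟩ j (by simp; omega)
  omega

lemma exists_low_meet {ℓ : ℕ} (a : Fin ℓ → ℕ) (ha : StrictMono a) (h1 : ∀ j, 1 ≤ a j)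
    (A : Fin ℓ → Submodule F V) (hAmono : Monotone A)
    (hdA : ∀ j, finrank F ↥(A j) = a j)
    (i : Fin ℓ) (hnc : ¬ ∃ j, a j = a i + 1)
    (X : Submodule F V) (hX : finrank F ↥X ≤ a i) (hXA : ¬ A i ≤ X) :
    ∃ W : Submodule F V, finrank F ↥W = ℓ ∧
      (∀ j : Fin ℓ, (j : ℕ) + 1 ≤ finrank F ↥(W ⊓ A j)) ∧
      finrank F ↥(W ⊓ X) ≤ (i : ℕ) := by
  have key : ∀ n, n ≤ ℓ → ∃ P : Submodule F V, finrank F ↥P = n ∧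
      (∀ j : Fin ℓ, (j : ℕ) < n → (j : ℕ) + 1 ≤ finrank F ↥(P ⊓ A j)) ∧
      (∀ j : Fin ℓ, n ≤ (j : ℕ) + 1 → P ≤ A j) ∧
      finrank F ↥(P ⊓ X) ≤ (i : ℕ) := by
    intro n
    induction n with
    | zero =>
      intro _
      refine ⟨⊥, finrank_bot F V, fun j hj => by omega, fun j _ => bot_le, ?_⟩
      rw [bot_inf_eq]
      simp [finrank_bot]
    | succ n ih =>
      intro hn
      obtain ⟨P, hP1, hP2, hP3, hP4⟩ := ih (by omega)
      have hnl : n < ℓ := hn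
      set j₀ : Fin ℓ := ⟨n, hnl⟩ with hj₀
      have hj₀v : (j₀ : ℕ) = n := rfl
      have hPA : P ≤ A j₀ := hP3 j₀ (by omega)
      suffices hstep : ∃ w, w ∈ A j₀ ∧ w ∉ P ∧
          finrank F ↥((P ⊔ (F ∙ w)) ⊓ X) ≤ (i : ℕ) by
        obtain ⟨w, hwA, hwP, hwX⟩ := hstep
        refine ⟨P ⊔ (F ∙ w), ?_, ?_, ?_, hwX⟩
        · rw [aux_finrank_sup_span P hwP, hP1]
        · intro j hj
          rcases lt_or_eq_of_le (Nat.lt_succ_iff.mp hj) with hlt | heq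
          · exact le_trans (hP2 j hlt)
              (Submodule.finrank_mono (inf_le_inf_right _ le_sup_left))
          · have hjj : j = j₀ := Fin.ext (by rw [hj₀v]; exact heq)
            have hle : P ⊔ (F ∙ w) ≤ A j := by
              rw [hjj]
              exact sup_le hPA ((Submodule.span_singleton_le_iff_mem w (A j₀)).mpr hwA)
            rw [inf_eq_left.mpr hle, aux_finrank_sup_span P hwP, hP1]
            omega
        · intro j hj
          have hj0j : j₀ ≤ j := by rw [Fin.le_def, hj₀v]; omega
          exact sup_le (hP3 j (by omega))
            ((Submodule.span_singleton_le_iff_mem w _).mpr (hAmono hj0j hwA))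
      by_cases hbr : finrank F ↥(P ⊓ X) < (i : ℕ) ∧ ¬ (X ⊓ A j₀ ≤ P)
      · obtain ⟨hd, hq⟩ := hbr
        obtain ⟨w, hwXA, hwP⟩ := SetLike.not_le_iff_exists.mp hq
        refine ⟨w, (Submodule.mem_inf.mp hwXA).2, hwP, ?_⟩
        have := aux_inf_sup_span_le P X w
        omega
      · have hbr' : finrank F ↥(P ⊓ X) < (i : ℕ) → X ⊓ A j₀ ≤ P := by
          intro h
          by_contra hq
          exact hbr ⟨h, hq⟩
        have hfeas : ¬ (A j₀ ≤ X ⊓ A j₀ ⊔ P) := by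
          intro hle
          have hrank := Submodule.finrank_mono hle
          have hsum := Submodule.finrank_sup_add_finrank_inf_eq (X ⊓ A j₀) P
          have hip : X ⊓ A j₀ ⊓ P = P ⊓ X := by
            apply le_antisymm
            · intro x hx
              obtain ⟨hx1, hxP⟩ := Submodule.mem_inf.mp hx
              exact Submodule.mem_inf.mpr ⟨hxP, (Submodule.mem_inf.mp hx1).1⟩
            · intro x hx
              obtain ⟨hxP, hxX⟩ := Submodule.mem_inf.mp hx
              exact Submodule.mem_inf.mpr ⟨Submodule.mem_inf.mpr ⟨hxX, hPA hxP⟩, hxP⟩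
          rw [hip] at hsum
          have he_le : finrank F ↥(X ⊓ A j₀) ≤ finrank F ↥X :=
            Submodule.finrank_mono inf_le_left
          have haj : finrank F ↥(A j₀) = a j₀ := hdA j₀
          by_cases hQ : X ⊓ A j₀ ≤ P
          · rw [sup_eq_right.mpr hQ] at hrank
            have hlow := a_lower ha h1 j₀
            omega
          · have hd_eq : finrank F ↥(P ⊓ X) = (i : ℕ) :=
              le_antisymm hP4 (not_lt.mp (fun h => hQ (hbr' h)))
            by_cases hni : n = (i : ℕ)
            · have hji : j₀ = i := Fin.ext hni
              have hlt : X ⊓ A i < A i :=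
                lt_of_le_of_ne inf_le_right
                  (fun h => hXA (le_trans (le_of_eq h.symm) inf_le_left))
              have he_lt : finrank F ↥(X ⊓ A i) < a i :=
                (hdA i) ▸ Submodule.finrank_lt_finrank_of_lt hlt
              rw [hji] at hsum hrank haj
              rw [hji] at he_le
              omega
            · have hdn : finrank F ↥(P ⊓ X) ≤ n :=
                hP1 ▸ Submodule.finrank_mono inf_le_left
              have hin : (i : ℕ) < n := by omega
              have hgap := nc_gap ha hnc (j := j₀) (by omega)
              omega
        obtain ⟨w, hwA, hwP'⟩ := SetLike.not_le_iff_exists.mp hfeas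
        have hwP : w ∉ P := fun h => hwP' (Submodule.mem_sup_right h)
        refine ⟨w, hwA, hwP, ?_⟩
        rw [aux_inf_eq P X (A j₀) w hPA hwA hwP']
        exact hP4
  obtain ⟨P, hP1, hP2, hP3, hP4⟩ := key ℓ le_rfl
  exact ⟨P, hP1, fun j => hP2 j j.isLt, hP4⟩

lemma fill_conditions {ℓ : ℕ} (a : Fin ℓ → ℕ) (ha : StrictMono a)
    (A : Fin ℓ → Submodule F V) (hAmono : Monotone A)
    (hdA : ∀ j, finrank F ↥(A j) = a j)
    (W : Submodule F V)
    (h : ∀ j : Fin ℓ, (¬ ∃ k, a k = a j + 1) → (j : ℕ) + 1 ≤ finrank F ↥(W ⊓ A j)) :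
    ∀ j : Fin ℓ, (j : ℕ) + 1 ≤ finrank F ↥(W ⊓ A j) := by
  suffices H : ∀ k : ℕ, ∀ j : Fin ℓ, ℓ - (j : ℕ) ≤ k + 1 →
      (j : ℕ) + 1 ≤ finrank F ↥(W ⊓ A j) by
    intro j
    exact H ℓ j (by omega)
  intro k
  induction k with
  | zero =>
    intro j hj
    apply h
    rintro ⟨k', hk'⟩
    have hlt : j < k' := ha.lt_iff_lt.mp (by omega)
    rw [Fin.lt_def] at hlt
    have := k'.isLt
    omega
  | succ k ih =>
    intro j hj
    by_cases hnc : ∃ k', a k' = a j + 1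
    · obtain ⟨k', hk'⟩ := hnc
      have hjk : j < k' := ha.lt_iff_lt.mp (by omega)
      rw [Fin.lt_def] at hjk
      have hj1 : (j : ℕ) + 1 < ℓ := by have := k'.isLt; omega
      set j' : Fin ℓ := ⟨(j : ℕ) + 1, hj1⟩ with hj'
      have hj'v : (j' : ℕ) = (j : ℕ) + 1 := rfl
      have hjj' : j ≤ j' := by rw [Fin.le_def, hj'v]; omega
      have hj'k : j' ≤ k' := by rw [Fin.le_def, hj'v]; omega
      have haj' : a j' = a j + 1 := by
        have h5 := ha.monotone hj'k
        have h6 : a j < a j' := ha (by rw [Fin.lt_def, hj'v]; omega)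
        omega
      have hIH := ih j' (by rw [hj'v]; omega)
      have hineq := aux_inf_mono_finrank (W := W) (hAmono hjj')
      rw [hdA j, hdA j'] at hineq
      omega
    · exact h j hnc

lemma finrank_map_semilinear
    {σ σ' : F →+* F} [RingHomInvPair σ σ'] [RingHomInvPair σ' σ]
    (g : V ≃ₛₗ[σ] V) (W : Submodule F V) :
    finrank F ↥(W.map (g : V →ₛₗ[σ] V)) = finrank F ↥W := by
  have hσ : Function.Bijective σ := by
    constructor
    · intro x y hxy
      have hx := RingHomInvPair.comp_apply_eq (σ := σ) (σ' := σ') (x := x)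
      have hy := RingHomInvPair.comp_apply_eq (σ := σ) (σ' := σ') (x := y)
      rw [← hx, ← hy, hxy]
    · intro y
      exact ⟨σ' y, RingHomInvPair.comp_apply_eq₂⟩
  have hr : Module.rank F ↥W = Module.rank F ↥(W.map (g : V →ₛₗ[σ] V)) := by
    refine rank_eq_of_equiv_equiv (⟨σ, map_zero σ⟩ : ZeroHom F F)
      (g.submoduleMap W).toAddEquiv hσ ?_
    intro r x
    exact (g.submoduleMap W).map_smulₛₗ r x
  rw [Module.finrank, Module.finrank, hr]

end Aux

/-- τ induced by a semilinear automorphism maps Ω_α^𝒜 onto itself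
iff τ(A_i) = A_i for all i with a_i ∈ α_nc. -/
theorem schubert_selfmap_iff_fixes_nonconsecutive
    (F : Type*) [Field F] (m ℓ : ℕ)
    (σ σ' : F →+* F) [RingHomInvPair σ σ'] [RingHomInvPair σ' σ]
    (g : (Fin m → F) ≃ₛₗ[σ] (Fin m → F))
    (a : Fin ℓ → ℕ) (ha : StrictMono a) (hrange : ∀ j, 1 ≤ a j ∧ a j ≤ m)
    (A : Fin ℓ → Submodule F (Fin m → F)) (hAmono : StrictMono A)
    (hdA : ∀ i, finrank F ↥(A i) = a i) :
    ((fun W => Submodule.map (g : (Fin m → F) →ₛₗ[σ] (Fin m → F)) W) ''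
      {W : Submodule F (Fin m → F) |
        finrank F ↥W = ℓ ∧ ∀ i : Fin ℓ, (i : ℕ) + 1 ≤ finrank F ↥(W ⊓ A i)} =
      {W : Submodule F (Fin m → F) |
        finrank F ↥W = ℓ ∧ ∀ i : Fin ℓ, (i : ℕ) + 1 ≤ finrank F ↥(W ⊓ A i)}) ↔
    (∀ i : Fin ℓ, (¬ ∃ j : Fin ℓ, a j = a i + 1) →
      Submodule.map (g : (Fin m → F) →ₛₗ[σ] (Fin m → F)) (A i) = A i) := by
  classical
  set gl := (g : (Fin m → F) →ₛₗ[σ] (Fin m → F)) with hgl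
  set gs := (g.symm : (Fin m → F) →ₛₗ[σ'] (Fin m → F)) with hgs
  have hginj : Function.Injective gl := g.injective
  have hgsinj : Function.Injective gs := g.symm.injective
  have hrk : ∀ W : Submodule F (Fin m → F), finrank F ↥(W.map gl) = finrank F ↥W :=
    fun W => finrank_map_semilinear g W
  have hrks : ∀ W : Submodule F (Fin m → F), finrank F ↥(W.map gs) = finrank F ↥W :=
    fun W => finrank_map_semilinear g.symm W
  have hmapsymm : ∀ W : Submodule F (Fin m → F), (W.map gl).map gs = W := by
    intro W
    ext x
    constructor
    · rintro ⟨y, ⟨w, hw, rfl⟩, rfl⟩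
      have he : gs (gl w) = w := g.symm_apply_apply w
      rwa [he]
    · intro hx
      exact ⟨g x, ⟨x, hx, rfl⟩, g.symm_apply_apply x⟩
  have hmapsymm' : ∀ W : Submodule F (Fin m → F), (W.map gs).map gl = W := by
    intro W
    ext x
    constructor
    · rintro ⟨y, ⟨w, hw, rfl⟩, rfl⟩
      have he : gl (gs w) = w := g.apply_symm_apply w
      rwa [he]
    · intro hx
      exact ⟨g.symm x, ⟨x, hx, rfl⟩, g.apply_symm_apply x⟩
  constructor
  · intro hΩ i hnc
    have hAB : A i ≤ (A i).map gl := by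
      by_contra hle
      obtain ⟨W, hW1, hW2, hW3⟩ := exists_low_meet a ha (fun j => (hrange j).1) A
        hAmono.monotone hdA i hnc ((A i).map gl) (by rw [hrk, hdA]) hle
      have hWmem : W ∈ {W : Submodule F (Fin m → F) |
          finrank F ↥W = ℓ ∧ ∀ i : Fin ℓ, (i : ℕ) + 1 ≤ finrank F ↥(W ⊓ A i)} :=
        ⟨hW1, hW2⟩
      rw [← hΩ] at hWmem
      obtain ⟨W', hW', hWeq⟩ := hWmem
      have hinf : (W'.map gl) ⊓ ((A i).map gl) = (W' ⊓ A i).map gl :=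
        (Submodule.map_inf gl hginj).symm
      rw [← hWeq, hinf, hrk] at hW3
      have := hW'.2 i
      omega
    exact (Submodule.eq_of_le_of_finrank_le hAB (le_of_eq (hrk (A i)))).symm
  · intro hfix
    ext W
    simp only [Set.mem_image, Set.mem_setOf_eq]
    constructor
    · rintro ⟨W', ⟨hW'1, hW'2⟩, rfl⟩
      refine ⟨by rw [hrk]; exact hW'1, ?_⟩
      apply fill_conditions a ha A hAmono.monotone hdA
      intro j hj
      rw [← hfix j hj, ← Submodule.map_inf gl hginj, hrk]
      exact hW'2 j
    · intro hW
      refine ⟨W.map gs, ⟨?_, ?_⟩, hmapsymm' W⟩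
      · rw [hrks]; exact hW.1
      · apply fill_conditions a ha A hAmono.monotone hdA
        intro j hj
        have hfixs : (A j).map gs = A j := by
          conv_lhs => rw [← hfix j hj]
          exact hmapsymm (A j)
        rw [← hfixs, ← Submodule.map_inf gs hgsinj, hrks]
        exact hW.2 j
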